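/- Let 1 < α < 2, let β satisfy α-1 ≤ β ≤ 1, set λ_n := [sin(πα)/(sin(π(α-β)) + sin(πβ))]·Γ(n+α)/n!, and let f : (0,1) → ℝ satisfy ∫₀¹ ρ^{(β-1,α-β-1)}(x) f(x)² dx < ∞. Define f_i := ∫₀¹ ρ^{(β-1,α-β-1)}(x) f(x) G_i^{(β-1,α-β-1)}(x) dx and c_i := f_{i+1}/(λ_i·|‖G_{i+1}^{(β-1,α-β-1)}‖|²) for i ≥ 0. Then there exists a constant C > 0, depending only on α and β, such that for all integers M > N ≥ 0, ∫₀¹ ρ^{(-(α-β),-β)}(x) ( ρ^{(α-β,β)}(x) Σ_{j=N}^{M-1} c_j G_j^{(α-β,β)}(x) )² dx ≤ C · Σ_{j=N+1}^{M} f_j² / |‖G_j^{(β-1,α-β-1)}‖|². -/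

import Mathlib

open Real MeasureTheory

/-- Jacobi polynomial `P_n^{(a,b)}(x)`. -/
noncomputable def jacobiP (a b : ℝ) (n : ℕ) (x : ℝ) : ℝ :=
  ∑ m ∈ Finset.range (n + 1),
    (1 / 2 ^ n : ℝ) *
      (Real.Gamma ((n : ℝ) + a + 1) /
        (Real.Gamma ((m : ℝ) + 1) * Real.Gamma ((n : ℝ) + a - (m : ℝ) + 1))) *
      (Real.Gamma ((n : ℝ) + b + 1) /
        (Real.Gamma ((n : ℝ) - (m : ℝ) + 1) * Real.Gamma (b + (m : ℝ) + 1))) *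
      (x - 1) ^ (n - m) * (x + 1) ^ m

/-- Shifted Jacobi polynomial `G_n^{(a,b)}(t) = P_n^{(a,b)}(2t-1)`. -/
noncomputable def jacobiG (a b : ℝ) (n : ℕ) (t : ℝ) : ℝ :=
  jacobiP a b n (2 * t - 1)

/-- Square of the norm constant `|‖G_n^{(a,b)}‖|`. -/
noncomputable def Gnorm2 (a b : ℝ) (n : ℕ) : ℝ :=
  Real.Gamma ((n : ℝ) + a + 1) * Real.Gamma ((n : ℝ) + b + 1) /
    ((2 * (n : ℝ) + a + b + 1) * Real.Gamma ((n : ℝ) + 1) * Real.Gamma ((n : ℝ) + a + b + 1))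

/-- The weight function `ρ^{(a,b)}(x) = (1-x)^a x^b`. -/
noncomputable def rho (a b x : ℝ) : ℝ := (1 - x) ^ a * x ^ b

/-- The eigenvalue `λ_n = [sin(πα)/(sin(π(α-β))+sin(πβ))]·Γ(n+α)/n!`. -/
noncomputable def lamda (α β : ℝ) (n : ℕ) : ℝ :=
  Real.sin (π * α) / (Real.sin (π * (α - β)) + Real.sin (π * β)) *
    (Real.Gamma ((n : ℝ) + α) / (n.factorial : ℝ))


section AuxJacobi
open intervalIntegral

lemma betaReal {u v : ℝ} (hu : 0 < u) (hv : 0 < v) :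
    ∫ t in (0:ℝ)..1, t ^ (u - 1) * (1 - t) ^ (v - 1) = Gamma u * Gamma v / Gamma (u + v) := by
  have h1 : Complex.betaIntegral u v =
      Complex.ofReal (∫ t in (0:ℝ)..1, t ^ (u - 1) * (1 - t) ^ (v - 1)) := by
    rw [Complex.betaIntegral, ← intervalIntegral.integral_ofReal]
    refine intervalIntegral.integral_congr fun x hx => ?_
    rw [Set.uIcc_of_le (by norm_num : (0:ℝ) ≤ 1)] at hx
    push_cast
    rw [Complex.ofReal_cpow hx.1, Complex.ofReal_cpow (by linarith [hx.2] : (0:ℝ) ≤ 1 - x)]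
    push_cast
    ring
  have h2 := Complex.Gamma_mul_Gamma_eq_betaIntegral
    (by simpa using hu : 0 < (u:ℂ).re) (by simpa using hv : 0 < (v:ℂ).re)
  rw [h1] at h2
  have h3 : ((u:ℂ) + v) = ((u + v : ℝ) : ℂ) := by push_cast; ring
  rw [h3, Complex.Gamma_ofReal, Complex.Gamma_ofReal, Complex.Gamma_ofReal] at h2
  have h4 : Real.Gamma u * Real.Gamma v =
      Real.Gamma (u + v) * ∫ t in (0:ℝ)..1, t ^ (u - 1) * (1 - t) ^ (v - 1) := by
    exact_mod_cast h2
  have h5 : Real.Gamma (u + v) ≠ 0 := (Real.Gamma_pos_of_pos (by linarith)).ne'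
  field_simp [h5] at h4 ⊢
  linarith [h4]

lemma Gamma_add_nat {x : ℝ} (hx : 0 < x) (n : ℕ) :
    Gamma (x + n) = Gamma x * ∏ i ∈ Finset.range n, (x + i) := by
  induction n with
  | zero => simp
  | succ n ih =>
    have : x + (n + 1 : ℕ) = (x + n) + 1 := by push_cast; ring
    rw [this, Real.Gamma_add_one (by positivity), ih, Finset.prod_range_succ]
    ring

-- continuity of weight pieces
lemma cont_rpow {b : ℝ} (hb : 0 < b) : Continuous (fun t : ℝ => t ^ b) :=
  continuous_iff_continuousAt.2 fun x => Real.continuousAt_rpow_const x b (Or.inr hb.le)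

lemma cont_rpow_one_sub {a : ℝ} (ha : 0 < a) : Continuous (fun t : ℝ => (1 - t) ^ a) :=
  (cont_rpow ha).comp (by continuity)

/-- The basic monomial integral. -/
lemma mono_int {a b : ℝ} (ha : 0 < a) (hb : 0 < b) (p q : ℕ) :
    ∫ t in (0:ℝ)..1, (1 - t) ^ a * t ^ b * ((t - 1) ^ p * t ^ q) =
      (-1 : ℝ) ^ p * (Gamma (b + q + 1) * Gamma (a + p + 1) / Gamma (a + b + p + q + 2)) := by
  have key : ∀ t ∈ Set.uIcc (0:ℝ) 1,
      (1 - t) ^ a * t ^ b * ((t - 1) ^ p * t ^ q) =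
      (-1 : ℝ) ^ p * (t ^ (b + q + 1 - 1) * (1 - t) ^ (a + p + 1 - 1)) := by
    intro t ht
    rw [Set.uIcc_of_le (by norm_num : (0:ℝ) ≤ 1)] at ht
    have h0 : 0 ≤ t := ht.1
    have h1 : 0 ≤ 1 - t := by linarith [ht.2]
    have e1 : (t - 1) ^ p = (-1 : ℝ) ^ p * (1 - t) ^ p := by
      rw [← neg_sub]; rw [neg_pow]
    have e2 : (1 - t) ^ a * (1 - t) ^ (p : ℕ) = (1 - t) ^ (a + p + 1 - 1) := by
      rw [← Real.rpow_natCast (1 - t) p, ← Real.rpow_add_of_nonneg h1 (le_of_lt ha) (by positivity)]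
      ring_nf
    have e3 : t ^ b * t ^ (q : ℕ) = t ^ (b + q + 1 - 1) := by
      rw [← Real.rpow_natCast t q, ← Real.rpow_add_of_nonneg h0 (le_of_lt hb) (by positivity)]
      ring_nf
    calc (1 - t) ^ a * t ^ b * ((t - 1) ^ p * t ^ q)
        = (-1:ℝ)^p * (((1-t)^a * (1-t)^(p:ℕ)) * (t^b * t^(q:ℕ))) := by rw [e1]; ring
      _ = (-1 : ℝ) ^ p * (t ^ (b + q + 1 - 1) * (1 - t) ^ (a + p + 1 - 1)) := by
          rw [e2, e3]; ring
  rw [intervalIntegral.integral_congr key, intervalIntegral.integral_const_mul,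
    betaReal (by positivity) (by positivity)]
  have : b + ↑q + 1 + (a + ↑p + 1) = a + b + ↑p + ↑q + 2 := by ring
  rw [this]

noncomputable def altS (b : ℝ) (n k : ℕ) : ℝ :=
  ∑ m ∈ Finset.range (n + 1),
    (-1 : ℝ) ^ m * (n.choose m : ℝ) * ∏ i ∈ Finset.range k, (b + 1 + m + i)

lemma abel' (q : ℕ → ℝ) (n : ℕ) :
    ∑ m ∈ Finset.range (n + 2), (-1 : ℝ) ^ m * ((n+1).choose m : ℝ) * q m =
    ∑ m ∈ Finset.range (n + 1), (-1 : ℝ) ^ m * (n.choose m : ℝ) * (q m - q (m + 1)) := by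
  have L : ∑ m ∈ Finset.range (n + 2), (-1 : ℝ) ^ m * ((n+1).choose m : ℝ) * q m
      = q 0 - (∑ i ∈ Finset.range (n+1), (-1:ℝ)^i * (n.choose i : ℝ) * q (i+1))
          - (∑ i ∈ Finset.range (n+1), (-1:ℝ)^i * (n.choose (i+1) : ℝ) * q (i+1)) := by
    rw [Finset.sum_range_succ' _ (n+1)]
    have h : ∀ x ∈ Finset.range (n+1), (-1:ℝ)^(x+1) * (((n+1).choose (x+1)):ℝ) * q (x+1)
        = -((-1:ℝ)^x * (n.choose x : ℝ) * q (x+1)) + -((-1:ℝ)^x * ((n.choose (x+1)) : ℝ) * q (x+1)) := by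
      intro x _; rw [Nat.choose_succ_succ]; push_cast; ring
    rw [Finset.sum_congr rfl h, Finset.sum_add_distrib]
    simp only [Finset.sum_neg_distrib, pow_zero, Nat.choose_zero_right, Nat.cast_one, one_mul]
    ring
  have R : ∑ m ∈ Finset.range (n + 1), (-1 : ℝ) ^ m * (n.choose m : ℝ) * (q m - q (m + 1))
      = (q 0 - ∑ i ∈ Finset.range (n+1), (-1:ℝ)^i * (n.choose (i+1) : ℝ) * q (i+1))
          - (∑ i ∈ Finset.range (n+1), (-1:ℝ)^i * (n.choose i : ℝ) * q (i+1)) := by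
    simp only [mul_sub]
    rw [Finset.sum_sub_distrib]
    congr 1
    rw [Finset.sum_range_succ' (fun m => (-1:ℝ)^m * (n.choose m : ℝ) * q m) n]
    simp only [pow_succ]
    have : ∀ i ∈ Finset.range (n+1), (-1:ℝ)^i * (n.choose (i+1) : ℝ) * q (i+1)
        = -((-1:ℝ)^i * (-1) * (n.choose (i+1) : ℝ) * q (i+1)) := by intros; ring
    rw [Finset.sum_congr rfl this, Finset.sum_neg_distrib]
    have e0 : ∑ i ∈ Finset.range (n+1), (-1:ℝ)^i * (-1) * (n.choose (i+1):ℝ) * q (i+1)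
        = ∑ i ∈ Finset.range n, (-1:ℝ)^i * (-1) * (n.choose (i+1):ℝ) * q (i+1) := by
      rw [Finset.sum_range_succ, Nat.choose_succ_self]
      norm_num
    rw [e0]
    simp only [Nat.choose_zero_right, Nat.cast_one, pow_zero, one_mul]
    ring
  rw [L, R]
  ring

lemma prodDiff (c : ℝ) (m k : ℕ) :
    (∏ i ∈ Finset.range (k+1), (c + m + i)) - (∏ i ∈ Finset.range (k+1), (c + (m+1:ℕ) + i)) =
      -(k + 1 : ℝ) * ∏ i ∈ Finset.range k, (c + 1 + m + i) := by
  have e1 : (∏ i ∈ Finset.range (k+1), (c + m + i))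
      = (∏ i ∈ Finset.range k, (c + 1 + m + i)) * (c + m) := by
    rw [Finset.prod_range_succ' (fun i => c + m + i) k]
    push_cast
    congr 1
    · apply Finset.prod_congr rfl; intros; push_cast; ring
    · ring
  have e2 : (∏ i ∈ Finset.range (k+1), (c + (m+1:ℕ) + i))
      = (∏ i ∈ Finset.range k, (c + 1 + m + i)) * (c + m + 1 + k) := by
    rw [Finset.prod_range_succ]
    push_cast
    congr 1
    · apply Finset.prod_congr rfl; intros; push_cast; ring
    · ring
  rw [e1, e2]; push_cast; ring

lemma altS_succ (b : ℝ) (n k : ℕ) :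
    altS b (n+1) (k+1) = -(k+1 : ℝ) * altS (b+1) n k := by
  unfold altS
  rw [abel' (fun m => ∏ i ∈ Finset.range (k+1), (b + 1 + m + i)) n]
  rw [Finset.mul_sum]
  apply Finset.sum_congr rfl
  intro m _
  have := prodDiff (b + 1) m k
  push_cast at this ⊢
  rw [this]
  have : ∏ i ∈ Finset.range k, (b + 1 + 1 + m + i) = ∏ i ∈ Finset.range k, (b + 1 + 1 + m + i) := rfl
  ring

lemma altS_zero (b : ℝ) (n : ℕ) : altS b (n+1) 0 = 0 := by
  unfold altS
  simp only [Finset.prod_range_zero, mul_one]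
  have := Int.alternating_sum_range_choose (n := n+1)
  have h2 : ((∑ i ∈ Finset.range (n + 2), (-1:ℤ) ^ i * ((n+1).choose i : ℤ) : ℤ) : ℝ) = 0 := by
    rw [this]; norm_num
  push_cast at h2
  convert h2 using 2

lemma altS_eq_zero (b : ℝ) {n k : ℕ} (h : k < n) : altS b n k = 0 := by
  induction n generalizing b k with
  | zero => omega
  | succ n ih =>
    rcases k with _ | k
    · exact altS_zero b n
    · rw [altS_succ, ih (b+1) (show k < n by omega)]; ring

lemma altS_diag (b : ℝ) (n : ℕ) : altS b n n = (-1:ℝ)^n * n.factorial := by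
  induction n generalizing b with
  | zero => unfold altS; simp
  | succ n ih =>
    rw [altS_succ, ih (b+1)]
    push_cast [Nat.factorial_succ]
    ring

noncomputable def gcoef (a b : ℝ) (n m : ℕ) : ℝ :=
  Gamma ((n:ℝ) + a + 1) / (m.factorial * Gamma (a + ((n - m : ℕ) : ℝ) + 1)) *
    (Gamma ((n:ℝ) + b + 1) / ((n - m).factorial * Gamma (b + (m:ℝ) + 1)))

lemma jacobiG_expand (a b : ℝ) (n : ℕ) (t : ℝ) :
    jacobiG a b n t = ∑ m ∈ Finset.range (n + 1), gcoef a b n m * ((t - 1) ^ (n - m) * t ^ m) := by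
  unfold jacobiG jacobiP gcoef
  apply Finset.sum_congr rfl
  intro m hm
  have hm' : m ≤ n := by simpa [Nat.lt_succ_iff] using hm
  have c1 : Gamma ((m:ℝ) + 1) = m.factorial := Real.Gamma_nat_eq_factorial m
  have c2 : ((n:ℝ) - (m:ℝ)) = ((n - m : ℕ) : ℝ) := by
    rw [Nat.cast_sub hm']
  have c3 : Gamma ((n:ℝ) - (m:ℝ) + 1) = (n - m).factorial := by
    rw [c2]; exact Real.Gamma_nat_eq_factorial (n - m)
  have c4 : (n:ℝ) + a - (m:ℝ) + 1 = a + ((n - m : ℕ) : ℝ) + 1 := by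
    rw [← c2]; ring
  have e1 : (2 * t - 1 - 1) ^ (n - m) = 2 ^ (n - m) * (t - 1) ^ (n - m) := by
    rw [← mul_pow]; congr 1; ring
  have e2 : (2 * t - 1 + 1) ^ m = 2 ^ m * t ^ m := by
    rw [← mul_pow]; congr 1; ring
  have e3 : (2:ℝ) ^ n = 2 ^ (n - m) * 2 ^ m := by
    rw [← pow_add, Nat.sub_add_cancel hm']
  rw [c1, c3, c4, e1, e2, e3]
  have h1 : ((2:ℝ) ^ (n - m)) ≠ 0 := by positivity
  have h2 : ((2:ℝ) ^ m) ≠ 0 := by positivity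
  field_simp

lemma neg_one_pow_sub {n m : ℕ} (h : m ≤ n) : (-1 : ℝ) ^ (n - m) = (-1) ^ n * (-1) ^ m := by
  have : (-1:ℝ) ^ (n - m) * ((-1:ℝ)^m * (-1:ℝ)^m) = (-1)^n * (-1)^m := by
    rw [← mul_assoc, ← pow_add, Nat.sub_add_cancel h]
  simpa [← pow_add, ← two_mul, pow_mul] using this

lemma cont_weight_mul {a b : ℝ} (ha : 0 < a) (hb : 0 < b) {g : ℝ → ℝ} (hg : Continuous g) :
    Continuous fun t : ℝ => (1 - t) ^ a * t ^ b * g t :=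
  ((cont_rpow_one_sub ha).mul (cont_rpow hb)).mul hg

lemma cont_jacobiG (a b : ℝ) (n : ℕ) : Continuous (jacobiG a b n) := by
  unfold jacobiG jacobiP
  continuity

/-- Weighted moment of `G_n`. -/
lemma int_wpow_G {a b : ℝ} (ha : 0 < a) (hb : 0 < b) (n k : ℕ) :
    ∫ t in (0:ℝ)..1, (1 - t) ^ a * t ^ b * (t ^ k * jacobiG a b n t) =
      Gamma ((n:ℝ) + a + 1) * Gamma ((n:ℝ) + b + 1) /
          (n.factorial * Gamma (a + b + n + k + 2)) * ((-1) ^ n * altS b n k) := by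
  have hrw : ∀ t : ℝ, (1 - t) ^ a * t ^ b * (t ^ k * jacobiG a b n t)
      = ∑ m ∈ Finset.range (n+1),
          gcoef a b n m * ((1 - t) ^ a * t ^ b * ((t - 1) ^ (n - m) * t ^ (k + m))) := by
    intro t
    rw [jacobiG_expand]
    simp only [Finset.mul_sum]
    apply Finset.sum_congr rfl
    intro m _
    rw [pow_add]
    ring
  simp_rw [hrw]
  rw [intervalIntegral.integral_finset_sum]
  swap
  · intro m _
    apply Continuous.intervalIntegrable
    exact (continuous_const.mul (cont_weight_mul ha hb (by continuity)))
  have hterm : ∀ m ∈ Finset.range (n+1),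
      (∫ t in (0:ℝ)..1, gcoef a b n m * ((1 - t) ^ a * t ^ b * ((t - 1) ^ (n - m) * t ^ (k + m))))
      = Gamma ((n:ℝ) + a + 1) * Gamma ((n:ℝ) + b + 1) /
          (n.factorial * Gamma (a + b + n + k + 2)) *
          ((-1)^n * ((-1:ℝ)^m * (n.choose m : ℝ) * ∏ i ∈ Finset.range k, (b + 1 + m + i))) := by
    intro m hm
    have hm' : m ≤ n := by simpa [Nat.lt_succ_iff] using hm
    rw [intervalIntegral.integral_const_mul, mono_int ha hb (n - m) (k + m)]
    have cast1 : a + ((n - m : ℕ):ℝ) + 1 = a + (n:ℝ) - m + 1 := by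
      rw [Nat.cast_sub hm']; ring
    have cast2 : b + ((k + m : ℕ):ℝ) + 1 = (b + (m:ℝ) + 1) + k := by push_cast; ring
    have cast3 : a + b + ((n - m : ℕ):ℝ) + ((k + m : ℕ):ℝ) + 2 = a + b + n + k + 2 := by
      rw [Nat.cast_sub hm']; push_cast; ring
    have hGsplit : Gamma (b + ((k + m : ℕ):ℝ) + 1)
        = Gamma (b + (m:ℝ) + 1) * ∏ i ∈ Finset.range k, (b + 1 + m + i) := by
      rw [cast2, Gamma_add_nat (by positivity) k]
      congr 1
      apply Finset.prod_congr rfl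
      intros; ring
    have hfactN : m.factorial * (n - m).factorial * (n.choose m) = n.factorial := by
      rw [mul_comm, ← mul_assoc]
      exact Nat.choose_mul_factorial_mul_factorial hm'
    have hfact : (m.factorial : ℝ) * (n - m).factorial * (n.choose m : ℝ) = n.factorial := by
      exact_mod_cast congrArg (Nat.cast (R := ℝ)) hfactN
    have hsign := neg_one_pow_sub (m := m) (n := n) hm'
    unfold gcoef
    rw [hGsplit, cast3, hsign]
    set A := Gamma ((n:ℝ) + a + 1) with hA
    set B := Gamma ((n:ℝ) + b + 1) with hB
    set A' := Gamma (a + ((n - m : ℕ):ℝ) + 1) with hA'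
    set B' := Gamma (b + (m:ℝ) + 1) with hB'
    set D := Gamma (a + b + (n:ℝ) + (k:ℝ) + 2) with hD
    set P := ∏ i ∈ Finset.range k, (b + 1 + (m:ℝ) + (i:ℝ)) with hP
    have hGa : Gamma (a + ((n - m : ℕ):ℝ) + 1) ≠ 0 := by
      apply (Real.Gamma_pos_of_pos ?_).ne'
      positivity
    have hGb : Gamma (b + (m:ℝ) + 1) ≠ 0 := (Real.Gamma_pos_of_pos (by positivity)).ne'
    have hGden : Gamma (a + b + (n:ℝ) + k + 2) ≠ 0 := by
      apply (Real.Gamma_pos_of_pos ?_).ne'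
      positivity
    have hmf : (m.factorial : ℝ) ≠ 0 := by positivity
    have hnmf : ((n - m).factorial : ℝ) ≠ 0 := by positivity
    have hnf : (n.factorial : ℝ) ≠ 0 := by positivity
    have hA'0 : A' ≠ 0 := hGa
    have hB'0 : B' ≠ 0 := hGb
    rw [div_mul_div_comm]
    field_simp
    rw [← hfact]
    ring
  rw [Finset.sum_congr rfl hterm, ← Finset.mul_sum]
  unfold altS
  rw [← Finset.mul_sum]

lemma moment_zero {a b : ℝ} (ha : 0 < a) (hb : 0 < b) {n k : ℕ} (h : k < n) :
    ∫ t in (0:ℝ)..1, (1 - t) ^ a * t ^ b * (t ^ k * jacobiG a b n t) = 0 := by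
  rw [int_wpow_G ha hb, altS_eq_zero b h]
  ring

lemma moment_diag {a b : ℝ} (ha : 0 < a) (hb : 0 < b) (n : ℕ) :
    ∫ t in (0:ℝ)..1, (1 - t) ^ a * t ^ b * (t ^ n * jacobiG a b n t) =
      Gamma ((n:ℝ) + a + 1) * Gamma ((n:ℝ) + b + 1) / Gamma (a + b + 2 * n + 2) := by
  rw [int_wpow_G ha hb, altS_diag]
  have h1 : ((-1:ℝ)^n * ((-1:ℝ)^n * (n.factorial : ℝ))) = n.factorial := by
    rw [← mul_assoc, ← pow_add, ← two_mul, pow_mul]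
    norm_num
  rw [h1]
  have hnf : (n.factorial : ℝ) ≠ 0 := by positivity
  have harg : a + b + (n:ℝ) + (n:ℝ) + 2 = a + b + 2 * n + 2 := by ring
  rw [harg]
  field_simp

lemma expand_int {a b : ℝ} (ha : 0 < a) (hb : 0 < b) (i j : ℕ) :
    ∫ t in (0:ℝ)..1, (1 - t) ^ a * t ^ b * (jacobiG a b i t * jacobiG a b j t) =
      ∑ m ∈ Finset.range (i + 1), ∑ r ∈ Finset.range (i - m + 1),
        (gcoef a b i m * ((i - m).choose r : ℝ) * (-1 : ℝ) ^ (i - m - r)) *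
          ∫ t in (0:ℝ)..1, (1 - t) ^ a * t ^ b * (t ^ (r + m) * jacobiG a b j t) := by
  have hpt : ∀ t : ℝ, (1 - t) ^ a * t ^ b * (jacobiG a b i t * jacobiG a b j t)
      = ∑ m ∈ Finset.range (i + 1), ∑ r ∈ Finset.range (i - m + 1),
          (gcoef a b i m * ((i - m).choose r : ℝ) * (-1 : ℝ) ^ (i - m - r)) *
            ((1 - t) ^ a * t ^ b * (t ^ (r + m) * jacobiG a b j t)) := by
    intro t
    rw [jacobiG_expand a b i t, Finset.sum_mul]
    simp only [Finset.mul_sum]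
    apply Finset.sum_congr rfl
    intro m _
    have hb1 : (t - 1) ^ (i - m) = ∑ r ∈ Finset.range (i - m + 1),
        t ^ r * (-1:ℝ) ^ (i - m - r) * ((i - m).choose r : ℝ) := by
      rw [show t - 1 = t + (-1) by ring, add_pow]
    rw [hb1]
    simp only [Finset.sum_mul, Finset.mul_sum]
    apply Finset.sum_congr rfl
    intro r _
    rw [pow_add]
    ring
  simp_rw [hpt]
  rw [intervalIntegral.integral_finset_sum]
  swap
  · intro m _
    apply Continuous.intervalIntegrable
    apply continuous_finset_sum
    intro r _
    exact continuous_const.mul (cont_weight_mul ha hb ((continuous_pow _).mul (cont_jacobiG a b j)))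
  apply Finset.sum_congr rfl
  intro m _
  rw [intervalIntegral.integral_finset_sum]
  swap
  · intro r _
    exact (continuous_const.mul
      (cont_weight_mul ha hb ((continuous_pow _).mul (cont_jacobiG a b j)))).intervalIntegrable _ _
  apply Finset.sum_congr rfl
  intro r _
  rw [intervalIntegral.integral_const_mul]

lemma ortho_lt {a b : ℝ} (ha : 0 < a) (hb : 0 < b) {i j : ℕ} (hij : i < j) :
    ∫ t in (0:ℝ)..1, (1 - t) ^ a * t ^ b * (jacobiG a b i t * jacobiG a b j t) = 0 := by
  rw [expand_int ha hb]
  apply Finset.sum_eq_zero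
  intro m hm
  apply Finset.sum_eq_zero
  intro r hr
  have hm' : m ≤ i := by simpa [Nat.lt_succ_iff] using hm
  have hr' : r ≤ i - m := by simpa [Nat.lt_succ_iff] using hr
  rw [moment_zero ha hb (by omega), mul_zero]

lemma norm_eq {a b : ℝ} (ha : 0 < a) (hb : 0 < b) (n : ℕ) :
    ∫ t in (0:ℝ)..1, (1 - t) ^ a * t ^ b * (jacobiG a b n t * jacobiG a b n t) =
      (∑ m ∈ Finset.range (n + 1), gcoef a b n m) *
        (Gamma ((n:ℝ) + a + 1) * Gamma ((n:ℝ) + b + 1) / Gamma (a + b + 2 * n + 2)) := by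
  rw [expand_int ha hb, Finset.sum_mul]
  apply Finset.sum_congr rfl
  intro m hm
  have hm' : m ≤ n := by simpa [Nat.lt_succ_iff] using hm
  rw [Finset.sum_eq_single_of_mem (n - m) (Finset.self_mem_range_succ _)]
  · rw [show n - m + m = n by omega, moment_diag ha hb, Nat.choose_self, Nat.sub_self]
    push_cast
    ring
  · intro r hr hne
    have hr' : r ≤ n - m := by simpa [Nat.lt_succ_iff] using hr
    rw [moment_zero ha hb (by omega), mul_zero]

lemma ortho_ne {a b : ℝ} (ha : 0 < a) (hb : 0 < b) {i j : ℕ} (hij : i ≠ j) :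
    ∫ t in (0:ℝ)..1, (1 - t) ^ a * t ^ b * (jacobiG a b i t * jacobiG a b j t) = 0 := by
  rcases lt_or_gt_of_ne hij with h | h
  · exact ortho_lt ha hb h
  · have : ∀ t : ℝ, (1 - t) ^ a * t ^ b * (jacobiG a b i t * jacobiG a b j t)
        = (1 - t) ^ a * t ^ b * (jacobiG a b j t * jacobiG a b i t) := by
      intro t; ring
    simp_rw [this]
    exact ortho_lt ha hb h

lemma sum_expansion {a b : ℝ} (ha : 0 < a) (hb : 0 < b) (c : ℕ → ℝ) (N M : ℕ) :
    ∫ t in (0:ℝ)..1, (1 - t) ^ a * t ^ b * (∑ j ∈ Finset.Ico N M, c j * jacobiG a b j t) ^ 2 =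
      ∑ j ∈ Finset.Ico N M, (c j) ^ 2 *
        ((∑ m ∈ Finset.range (j + 1), gcoef a b j m) *
          (Gamma ((j:ℝ) + a + 1) * Gamma ((j:ℝ) + b + 1) / Gamma (a + b + 2 * j + 2))) := by
  have hpt : ∀ t : ℝ,
      (1 - t) ^ a * t ^ b * (∑ j ∈ Finset.Ico N M, c j * jacobiG a b j t) ^ 2
      = ∑ j ∈ Finset.Ico N M, ∑ l ∈ Finset.Ico N M,
          (c j * c l) * ((1 - t) ^ a * t ^ b * (jacobiG a b j t * jacobiG a b l t)) := by
    intro t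
    rw [sq, Finset.sum_mul_sum]
    simp only [Finset.mul_sum]
    apply Finset.sum_congr rfl; intro j _
    apply Finset.sum_congr rfl; intro l _
    ring
  simp_rw [hpt]
  rw [intervalIntegral.integral_finset_sum]
  swap
  · intro j _
    apply Continuous.intervalIntegrable
    apply continuous_finset_sum
    intro l _
    exact continuous_const.mul (cont_weight_mul ha hb ((cont_jacobiG a b j).mul (cont_jacobiG a b l)))
  apply Finset.sum_congr rfl
  intro j hj
  rw [intervalIntegral.integral_finset_sum]
  swap
  · intro l _
    exact (continuous_const.mul (cont_weight_mul ha hb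
      ((cont_jacobiG a b j).mul (cont_jacobiG a b l)))).intervalIntegrable _ _
  rw [Finset.sum_eq_single_of_mem j hj]
  · rw [intervalIntegral.integral_const_mul, norm_eq ha hb]
    ring
  · intro l _ hne
    rw [intervalIntegral.integral_const_mul, ortho_ne ha hb (Ne.symm hne), mul_zero]

lemma prod_shift_factorial (p q : ℕ) :
    (∏ i ∈ Finset.range p, (q + 1 + i)) * q.factorial = (p + q).factorial := by
  induction p with
  | zero => simp
  | succ p ih =>
    rw [Finset.prod_range_succ, mul_right_comm, ih,
      show p + 1 + q = (p + q) + 1 by omega, Nat.factorial_succ]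
    ring

lemma prod_shift_factorial_real (p q : ℕ) :
    (∏ i ∈ Finset.range p, ((q : ℝ) + 1 + i)) * q.factorial = ((p + q).factorial : ℝ) := by
  rw [← prod_shift_factorial p q]
  push_cast
  rfl

lemma gcoef_le {a b : ℝ} (ha : 0 < a) (ha1 : a ≤ 1) (hb : 0 < b) (hb1 : b ≤ 1)
    {n m : ℕ} (hm : m ≤ n) :
    gcoef a b n m ≤ ((n+1).choose m : ℝ) * ((n+1).choose (m+1) : ℝ) := by
  have hGa : (0:ℝ) < Gamma (a + ((n - m : ℕ) : ℝ) + 1) := Real.Gamma_pos_of_pos (by positivity)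
  have hGb : (0:ℝ) < Gamma (b + (m : ℝ) + 1) := Real.Gamma_pos_of_pos (by positivity)
  have split1 : Gamma ((n:ℝ) + a + 1)
      = Gamma (a + ((n - m : ℕ) : ℝ) + 1) * ∏ i ∈ Finset.range m, (a + ((n - m : ℕ):ℝ) + 1 + i) := by
    rw [← Gamma_add_nat (by positivity : (0:ℝ) < a + ((n - m : ℕ):ℝ) + 1) m]
    congr 1
    rw [Nat.cast_sub hm]
    ring
  have split2 : Gamma ((n:ℝ) + b + 1)
      = Gamma (b + (m : ℝ) + 1) * ∏ i ∈ Finset.range (n - m), (b + (m:ℝ) + 1 + i) := by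
    rw [← Gamma_add_nat (by positivity : (0:ℝ) < b + (m:ℝ) + 1) (n - m)]
    congr 1
    rw [Nat.cast_sub hm]
    ring
  have bnd1 : ∏ i ∈ Finset.range m, (a + ((n - m : ℕ):ℝ) + 1 + i)
      ≤ ∏ i ∈ Finset.range m, (((n - m + 1 : ℕ) : ℝ) + 1 + i) := by
    apply Finset.prod_le_prod
    · intro i _; positivity
    · intro i _; push_cast; linarith
  have bnd2 : ∏ i ∈ Finset.range (n - m), (b + (m:ℝ) + 1 + i)
      ≤ ∏ i ∈ Finset.range (n - m), (((m + 1 : ℕ):ℝ) + 1 + i) := by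
    apply Finset.prod_le_prod
    · intro i _; positivity
    · intro i _; push_cast; linarith
  have id1 : ∏ i ∈ Finset.range m, (((n - m + 1 : ℕ) : ℝ) + 1 + i)
      = ((n+1).factorial : ℝ) / ((n - m + 1).factorial : ℝ) := by
    rw [eq_div_iff (by positivity), prod_shift_factorial_real m (n - m + 1),
      show m + (n - m + 1) = n + 1 by omega]
  have id2 : ∏ i ∈ Finset.range (n - m), (((m + 1 : ℕ):ℝ) + 1 + i)
      = ((n+1).factorial : ℝ) / ((m + 1).factorial : ℝ) := by
    rw [eq_div_iff (by positivity), prod_shift_factorial_real (n - m) (m + 1),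
      show n - m + (m + 1) = n + 1 by omega]
  have ch1 : ((n+1).choose m : ℝ) = ((n+1).factorial : ℝ) /
      ((m.factorial : ℝ) * ((n - m + 1).factorial : ℝ)) := by
    rw [eq_div_iff (by positivity)]
    exact_mod_cast congrArg (Nat.cast (R := ℝ)) (by
      have := Nat.choose_mul_factorial_mul_factorial (show m ≤ n + 1 by omega)
      rw [show n + 1 - m = n - m + 1 by omega] at this
      rw [← mul_assoc]; exact this)
  have ch2 : ((n+1).choose (m+1) : ℝ) = ((n+1).factorial : ℝ) /
      (((m+1).factorial : ℝ) * ((n - m).factorial : ℝ)) := by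
    rw [eq_div_iff (by positivity)]
    exact_mod_cast congrArg (Nat.cast (R := ℝ)) (by
      have := Nat.choose_mul_factorial_mul_factorial (show m + 1 ≤ n + 1 by omega)
      rw [show n + 1 - (m+1) = n - m by omega] at this
      rw [← mul_assoc]; exact this)
  have hmf : (0:ℝ) < (m.factorial : ℝ) := by positivity
  have hnmf : (0:ℝ) < ((n - m).factorial : ℝ) := by positivity
  unfold gcoef
  rw [split1, split2]
  have e1 : Gamma (a + ((n - m : ℕ):ℝ) + 1) *
        (∏ i ∈ Finset.range m, (a + ((n - m : ℕ):ℝ) + 1 + i)) /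
        ((m.factorial : ℝ) * Gamma (a + ((n - m : ℕ):ℝ) + 1))
      = (∏ i ∈ Finset.range m, (a + ((n - m : ℕ):ℝ) + 1 + i)) / (m.factorial : ℝ) := by
    rw [mul_comm ((m.factorial : ℝ)) (Gamma (a + ((n - m : ℕ):ℝ) + 1)),
      mul_div_mul_left _ _ hGa.ne']
  have e2 : Gamma (b + (m:ℝ) + 1) *
        (∏ i ∈ Finset.range (n - m), (b + (m:ℝ) + 1 + i)) /
        (((n - m).factorial : ℝ) * Gamma (b + (m:ℝ) + 1))
      = (∏ i ∈ Finset.range (n - m), (b + (m:ℝ) + 1 + i)) / ((n - m).factorial : ℝ) := by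
    rw [mul_comm (((n - m).factorial : ℝ)) (Gamma (b + (m:ℝ) + 1)),
      mul_div_mul_left _ _ hGb.ne']
  rw [e1, e2]
  have hp1 : (0:ℝ) ≤ ∏ i ∈ Finset.range m, (a + ((n - m : ℕ):ℝ) + 1 + i) := by
    apply Finset.prod_nonneg; intro i _; positivity
  have hp2 : (0:ℝ) ≤ ∏ i ∈ Finset.range (n - m), (b + (m:ℝ) + 1 + i) := by
    apply Finset.prod_nonneg; intro i _; positivity
  have d1 := (div_le_div_iff_of_pos_right hmf).mpr bnd1
  have d2 := (div_le_div_iff_of_pos_right hnmf).mpr bnd2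
  have hq1 : (0:ℝ) ≤ ∏ i ∈ Finset.range m, (((n - m + 1 : ℕ) : ℝ) + 1 + i) := by
    apply Finset.prod_nonneg; intro i _; positivity
  calc (∏ i ∈ Finset.range m, (a + ((n - m : ℕ):ℝ) + 1 + i)) / (m.factorial : ℝ) *
        ((∏ i ∈ Finset.range (n - m), (b + (m:ℝ) + 1 + i)) / ((n - m).factorial : ℝ))
      ≤ ((∏ i ∈ Finset.range m, (((n - m + 1 : ℕ) : ℝ) + 1 + i)) / (m.factorial : ℝ)) *
        ((∏ i ∈ Finset.range (n - m), (((m + 1 : ℕ):ℝ) + 1 + i)) / ((n - m).factorial : ℝ)) :=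
        mul_le_mul d1 d2 (div_nonneg hp2 hnmf.le) (div_nonneg hq1 hmf.le)
    _ = ((n+1).factorial : ℝ) / ((m.factorial : ℝ) * ((n - m + 1).factorial : ℝ)) *
        (((n+1).factorial : ℝ) / (((m+1).factorial : ℝ) * ((n - m).factorial : ℝ))) := by
        rw [id1, id2]; field_simp
    _ = ((n+1).choose m : ℝ) * ((n+1).choose (m+1) : ℝ) := by rw [ch1, ch2]

lemma vand (n : ℕ) :
    ∑ m ∈ Finset.range (n+1), (n+1).choose m * (n+1).choose (m+1) = (2*n+2).choose n := by
  rw [show 2*n+2 = (n+1)+(n+1) by ring, Nat.add_choose_eq,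
    Finset.Nat.sum_antidiagonal_eq_sum_range_succ_mk]
  apply Finset.sum_congr rfl
  intro m hm
  have hm' : m ≤ n := by simpa [Nat.lt_succ_iff] using hm
  congr 1
  rw [show n - m = (n+1) - (m+1) by omega, Nat.choose_symm (by omega)]

lemma choose_bound (j : ℕ) : (2*j+2).choose j ≤ 2 * (2*j+1).choose j := by
  rcases j with _ | k
  · simp
  · have pas : (2*(k+1)+2).choose (k+1) = (2*(k+1)+1).choose k + (2*(k+1)+1).choose (k+1) := by
      rw [show 2*(k+1)+2 = (2*(k+1)+1) + 1 by ring]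
      exact Nat.choose_succ_succ _ _
    have mono : (2*(k+1)+1).choose k ≤ (2*(k+1)+1).choose (k+1) :=
      Nat.choose_le_succ_of_lt_half_left (by omega)
    omega

lemma Lsum_le {a b : ℝ} (ha : 0 < a) (ha1 : a ≤ 1) (hb : 0 < b) (hb1 : b ≤ 1) (j : ℕ) :
    ∑ m ∈ Finset.range (j + 1), gcoef a b j m ≤ 2 * ((2*j+1).choose j : ℝ) := by
  calc ∑ m ∈ Finset.range (j + 1), gcoef a b j m
      ≤ ∑ m ∈ Finset.range (j + 1), ((j+1).choose m : ℝ) * ((j+1).choose (m+1) : ℝ) := by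
        apply Finset.sum_le_sum
        intro m hm
        exact gcoef_le ha ha1 hb hb1 (by simpa [Nat.lt_succ_iff] using hm)
    _ = (((2*j+2).choose j : ℕ) : ℝ) := by
        rw [← vand j]; push_cast; rfl
    _ ≤ 2 * ((2*j+1).choose j : ℝ) := by
        exact_mod_cast Nat.cast_le.mpr (choose_bound j)

lemma K_neg {α β : ℝ} (hα1 : 1 < α) (hα2 : α < 2) (hβ1 : α - 1 ≤ β) (hβ2 : β ≤ 1) :
    Real.sin (π * α) / (Real.sin (π * (α - β)) + Real.sin (π * β)) < 0 := by
  have hπ := Real.pi_pos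
  have hβpos : 0 < β := by linarith
  have hab : 0 < α - β := by linarith
  have hab1 : α - β ≤ 1 := by linarith
  have hnum : Real.sin (π * α) < 0 := by
    have h1 : 0 < Real.sin (π * α - π) :=
      Real.sin_pos_of_pos_of_lt_pi (by nlinarith) (by nlinarith)
    have h2 := Real.sin_sub_pi (π * α)
    linarith [h2 ▸ h1]
  have hd1 : 0 ≤ Real.sin (π * (α - β)) :=
    Real.sin_nonneg_of_nonneg_of_le_pi (by positivity) (by nlinarith)
  have hd2 : 0 ≤ Real.sin (π * β) :=
    Real.sin_nonneg_of_nonneg_of_le_pi (by positivity) (by nlinarith)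
  have hden : 0 < Real.sin (π * (α - β)) + Real.sin (π * β) := by
    rcases lt_or_eq_of_le hβ2 with h | h
    · have : 0 < Real.sin (π * β) := Real.sin_pos_of_pos_of_lt_pi (by positivity) (by nlinarith)
      linarith
    · have hlt : α - β < 1 := by rw [h]; linarith
      have : 0 < Real.sin (π * (α - β)) :=
        Real.sin_pos_of_pos_of_lt_pi (by positivity) (by nlinarith)
      linarith
  exact div_neg_of_neg_of_pos hnum hden

lemma Gnorm2_val {α β : ℝ} (hα1 : 1 < α) (hβ2 : β ≤ 1) (j : ℕ) :
    Gnorm2 (β - 1) (α - β - 1) (j + 1) =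
      Gamma ((j:ℝ) + β + 1) * Gamma ((j:ℝ) + (α - β) + 1) /
        ((2 * (j:ℝ) + α + 1) * ((j+1).factorial : ℝ) * Gamma ((j:ℝ) + α)) := by
  unfold Gnorm2
  have c1 : ((j+1:ℕ):ℝ) + (β - 1) + 1 = (j:ℝ) + β + 1 := by push_cast; ring
  have c2 : ((j+1:ℕ):ℝ) + (α - β - 1) + 1 = (j:ℝ) + (α - β) + 1 := by push_cast; ring
  have c3 : 2 * ((j+1:ℕ):ℝ) + (β - 1) + (α - β - 1) + 1 = 2 * (j:ℝ) + α + 1 := by push_cast; ring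
  have c4 : Gamma (((j+1:ℕ):ℝ) + 1) = ((j+1).factorial : ℝ) := Real.Gamma_nat_eq_factorial (j+1)
  have c5 : ((j+1:ℕ):ℝ) + (β - 1) + (α - β - 1) + 1 = (j:ℝ) + α := by push_cast; ring
  rw [c1, c2, c3, c4, c5]

lemma key_bound {α β : ℝ} (hα1 : 1 < α) (hα2 : α < 2) (hβ1 : α - 1 ≤ β) (hβ2 : β ≤ 1) (j : ℕ) :
    (∑ m ∈ Finset.range (j + 1), gcoef (α - β) β j m) *
      (Gamma ((j:ℝ) + (α - β) + 1) * Gamma ((j:ℝ) + β + 1) /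
        Gamma ((α - β) + β + 2 * (j:ℝ) + 2)) ≤
    (2 / ((Real.sin (π * α) / (Real.sin (π * (α - β)) + Real.sin (π * β)))^2 *
        Gamma α * Gamma (α + 1))) *
      ((lamda α β j)^2 * Gnorm2 (β - 1) (α - β - 1) (j + 1)) := by
  have hβpos : 0 < β := by linarith
  have hab : 0 < α - β := by linarith
  have hab1 : α - β ≤ 1 := by linarith
  have hK : Real.sin (π * α) / (Real.sin (π * (α - β)) + Real.sin (π * β)) < 0 :=
    K_neg hα1 hα2 hβ1 hβ2
  set K := Real.sin (π * α) / (Real.sin (π * (α - β)) + Real.sin (π * β)) with hKdef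
  have hK2 : 0 < K ^ 2 := pow_two_pos_of_ne_zero hK.ne
  set L := ∑ m ∈ Finset.range (j + 1), gcoef (α - β) β j m with hLdef
  have hjr : (0:ℝ) ≤ (j:ℝ) := Nat.cast_nonneg j
  have hΓα : 0 < Gamma α := Real.Gamma_pos_of_pos (by linarith)
  have hΓα1 : 0 < Gamma (α + 1) := Real.Gamma_pos_of_pos (by linarith)
  have hΓjα : 0 < Gamma ((j:ℝ) + α) := Real.Gamma_pos_of_pos (by linarith)
  have hΓp : 0 < Gamma ((j:ℝ) + (α - β) + 1) := Real.Gamma_pos_of_pos (by linarith)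
  have hΓq : 0 < Gamma ((j:ℝ) + β + 1) := Real.Gamma_pos_of_pos (by linarith)
  have hΓD1 : 0 < Gamma (α + 2 * (j:ℝ) + 1) := Real.Gamma_pos_of_pos (by linarith)
  have hw : (0:ℝ) < 2 * (j:ℝ) + α + 1 := by linarith
  have hfj : (0:ℝ) < (j.factorial : ℝ) := by positivity
  have hfj1 : (0:ℝ) < ((j+1).factorial : ℝ) := by positivity
  have hf2j1 : (0:ℝ) < (((2*j+1).factorial : ℕ) : ℝ) := by positivity
  -- rewrite the big Gamma in LHS denominator
  have rD : Gamma ((α - β) + β + 2 * (j:ℝ) + 2)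
      = (2 * (j:ℝ) + α + 1) * Gamma (α + 2 * (j:ℝ) + 1) := by
    rw [show (α - β) + β + 2 * (j:ℝ) + 2 = (α + 2 * (j:ℝ) + 1) + 1 by ring,
      Real.Gamma_add_one (by linarith)]
    ring
  -- lower bound Γ(j+α) ≥ Γ(α)·j!
  have g1 : Gamma α * (j.factorial : ℝ) ≤ Gamma ((j:ℝ) + α) := by
    have e : Gamma (α + (j:ℕ)) = Gamma α * ∏ i ∈ Finset.range j, (α + i) :=
      Gamma_add_nat (by linarith) j
    have e2 : Gamma ((j:ℝ) + α) = Gamma α * ∏ i ∈ Finset.range j, (α + i) := by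
      rw [← e]; congr 1; ring
    rw [e2]
    have hprod : ((j.factorial : ℕ) : ℝ) ≤ ∏ i ∈ Finset.range j, (α + i) := by
      have idp : ∏ i ∈ Finset.range j, (((0:ℕ):ℝ) + 1 + i) = (j.factorial : ℝ) := by
        have := prod_shift_factorial_real j 0
        simpa using this
      rw [← idp]
      apply Finset.prod_le_prod
      · intro i _; positivity
      · intro i _; push_cast; linarith
    calc Gamma α * (j.factorial : ℝ) ≤ Gamma α * ∏ i ∈ Finset.range j, (α + i) := by
          apply mul_le_mul_of_nonneg_left _ hΓα.le
          exact_mod_cast hprod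
      _ = _ := rfl
  -- lower bound Γ(α+2j+1) ≥ Γ(α+1)·(2j+1)!
  have g2 : Gamma (α + 1) * (((2*j+1).factorial : ℕ) : ℝ) ≤ Gamma (α + 2 * (j:ℝ) + 1) := by
    have e : Gamma ((α + 1) + ((2*j : ℕ):ℝ)) = Gamma (α+1) * ∏ i ∈ Finset.range (2*j), (α + 1 + i) :=
      Gamma_add_nat (by linarith) (2*j)
    have e2 : Gamma (α + 2 * (j:ℝ) + 1) = Gamma (α+1) * ∏ i ∈ Finset.range (2*j), (α + 1 + i) := by
      rw [← e]; congr 1; push_cast; ring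
    rw [e2]
    have hprod : (((2*j+1).factorial : ℕ) : ℝ) ≤ ∏ i ∈ Finset.range (2*j), (α + 1 + i) := by
      have idp : ∏ i ∈ Finset.range (2*j), (((1:ℕ):ℝ) + 1 + i) = (((2*j+1).factorial : ℕ) : ℝ) := by
        have := prod_shift_factorial_real (2*j) 1
        simpa using this
      rw [← idp]
      apply Finset.prod_le_prod
      · intro i _; positivity
      · intro i _; push_cast; linarith
    apply mul_le_mul_of_nonneg_left hprod hΓα1.le
  -- bound on L
  have hL : L ≤ 2 * (((2*j+1).choose j : ℕ) : ℝ) := Lsum_le hab hab1 hβpos hβ2 j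
  have hch : (((2*j+1).choose j : ℕ) : ℝ) * (j.factorial : ℝ) * ((j+1).factorial : ℝ)
      = (((2*j+1).factorial : ℕ) : ℝ) := by
    have := Nat.choose_mul_factorial_mul_factorial (show j ≤ 2*j+1 by omega)
    rw [show 2*j+1-j = j+1 by omega] at this
    exact_mod_cast congrArg (Nat.cast (R := ℝ)) this
  have hL0 : 0 ≤ L := by
    apply Finset.sum_nonneg
    intro m hm
    unfold gcoef
    have h1 : 0 < Gamma ((j:ℝ) + (α - β) + 1) := hΓp
    have h2 : 0 < Gamma ((α-β) + ((j - m : ℕ):ℝ) + 1) := Real.Gamma_pos_of_pos (by positivity)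
    have h3 : 0 < Gamma ((j:ℝ) + β + 1) := hΓq
    have h4 : 0 < Gamma (β + (m:ℝ) + 1) := Real.Gamma_pos_of_pos (by positivity)
    positivity
  -- rewrite RHS
  rw [Gnorm2_val hα1 hβ2 j]
  simp only [lamda]
  rw [← hKdef, rD]
  have hRHSeq : (2 / (K^2 * Gamma α * Gamma (α+1))) *
      ((K * (Gamma ((j:ℝ)+α) / (j.factorial:ℝ)))^2 *
        (Gamma ((j:ℝ)+β+1) * Gamma ((j:ℝ)+(α-β)+1) /
          ((2*(j:ℝ)+α+1) * ((j+1).factorial:ℝ) * Gamma ((j:ℝ)+α))))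
      = 2 * Gamma ((j:ℝ)+α) * Gamma ((j:ℝ)+β+1) * Gamma ((j:ℝ)+(α-β)+1) /
          (Gamma α * Gamma (α+1) * (j.factorial:ℝ)^2 * ((2*(j:ℝ)+α+1) * ((j+1).factorial:ℝ))) := by
    field_simp
    ring
    exact mul_inv_cancel₀ hK.ne
  rw [hRHSeq]
  have hLHSeq : L * (Gamma ((j:ℝ)+(α-β)+1) * Gamma ((j:ℝ)+β+1) /
      ((2*(j:ℝ)+α+1) * Gamma (α+2*(j:ℝ)+1)))
      = L * Gamma ((j:ℝ)+(α-β)+1) * Gamma ((j:ℝ)+β+1) /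
        ((2*(j:ℝ)+α+1) * Gamma (α+2*(j:ℝ)+1)) := by ring
  rw [hLHSeq, div_le_div_iff₀ (by positivity) (by positivity)]
  -- cleared form
  have h1 : L * (j.factorial:ℝ) * ((j+1).factorial:ℝ) ≤ 2 * (((2*j+1).factorial : ℕ) : ℝ) := by
    calc L * (j.factorial:ℝ) * ((j+1).factorial:ℝ)
        ≤ (2 * (((2*j+1).choose j : ℕ) : ℝ)) * (j.factorial:ℝ) * ((j+1).factorial:ℝ) := by
          apply mul_le_mul_of_nonneg_right _ hfj1.le
          exact mul_le_mul_of_nonneg_right hL hfj.le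
      _ = 2 * ((((2*j+1).choose j : ℕ) : ℝ) * (j.factorial:ℝ) * ((j+1).factorial:ℝ)) := by ring
      _ = 2 * (((2*j+1).factorial : ℕ) : ℝ) := by rw [hch]
  have hA : (Gamma α * (j.factorial:ℝ)) * (Gamma (α+1) * (((2*j+1).factorial : ℕ) : ℝ))
      ≤ Gamma ((j:ℝ)+α) * Gamma (α+2*(j:ℝ)+1) :=
    mul_le_mul g1 g2 (by positivity) hΓjα.le
  calc L * Gamma ((j:ℝ)+(α-β)+1) * Gamma ((j:ℝ)+β+1) *
        (Gamma α * Gamma (α+1) * (j.factorial:ℝ)^2 * ((2*(j:ℝ)+α+1) * ((j+1).factorial:ℝ)))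
      = (L * (j.factorial:ℝ) * ((j+1).factorial:ℝ)) *
        (Gamma ((j:ℝ)+(α-β)+1) * Gamma ((j:ℝ)+β+1) * Gamma α * Gamma (α+1) *
          (j.factorial:ℝ) * (2*(j:ℝ)+α+1)) := by ring
    _ ≤ (2 * (((2*j+1).factorial : ℕ) : ℝ)) *
        (Gamma ((j:ℝ)+(α-β)+1) * Gamma ((j:ℝ)+β+1) * Gamma α * Gamma (α+1) *
          (j.factorial:ℝ) * (2*(j:ℝ)+α+1)) := by
        apply mul_le_mul_of_nonneg_right h1
        positivity
    _ = 2 * ((Gamma α * (j.factorial:ℝ)) * (Gamma (α+1) * (((2*j+1).factorial : ℕ) : ℝ))) *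
        (Gamma ((j:ℝ)+(α-β)+1) * Gamma ((j:ℝ)+β+1) * (2*(j:ℝ)+α+1)) := by ring
    _ ≤ 2 * (Gamma ((j:ℝ)+α) * Gamma (α+2*(j:ℝ)+1)) *
        (Gamma ((j:ℝ)+(α-β)+1) * Gamma ((j:ℝ)+β+1) * (2*(j:ℝ)+α+1)) := by
        apply mul_le_mul_of_nonneg_right _ (by positivity)
        exact mul_le_mul_of_nonneg_left hA (by norm_num)
    _ = 2 * Gamma ((j:ℝ)+α) * Gamma ((j:ℝ)+β+1) * Gamma ((j:ℝ)+(α-β)+1) *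
        ((2*(j:ℝ)+α+1) * Gamma (α+2*(j:ℝ)+1)) := by ring

lemma rpow_neg_sq {y e : ℝ} (hy : 0 ≤ y) (he : 0 < e) : y ^ (-e) * (y ^ e) ^ 2 = y ^ e := by
  rcases eq_or_lt_of_le hy with h | h
  · rw [← h, Real.zero_rpow (show -e ≠ 0 by linarith), Real.zero_rpow he.ne']
    ring
  · have hp : 0 < y ^ e := Real.rpow_pos_of_pos h e
    rw [Real.rpow_neg h.le, sq]
    field_simp


end AuxJacobi

/-- Cauchy-sequence estimate for the partial sums of the spectral expansion of `q`
in the `ρ^{(-(α-β),-β)}`-weighted `L²` norm. -/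
theorem partial_sum_cauchy_bound (α β : ℝ) (hα1 : 1 < α) (hα2 : α < 2)
    (hβ1 : α - 1 ≤ β) (hβ2 : β ≤ 1) :
    ∃ C : ℝ, 0 < C ∧
      ∀ f : ℝ → ℝ,
        IntegrableOn (fun x => rho (β - 1) (α - β - 1) x * f x ^ 2) (Set.Ioo 0 1) →
        ∀ fc : ℕ → ℝ,
          (∀ i, fc i = ∫ x in (0:ℝ)..1,
              rho (β - 1) (α - β - 1) x * f x * jacobiG (β - 1) (α - β - 1) i x) →
        ∀ c : ℕ → ℝ,
          (∀ i, c i = fc (i + 1) / (lamda α β i * Gnorm2 (β - 1) (α - β - 1) (i + 1))) →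
        ∀ M N : ℕ, N < M →
          (∫ x in (0:ℝ)..1, rho (-(α - β)) (-β) x *
              (rho (α - β) β x * ∑ j ∈ Finset.Ico N M, c j * jacobiG (α - β) β j x) ^ 2) ≤
            C * ∑ j ∈ Finset.Icc (N + 1) M, fc j ^ 2 / Gnorm2 (β - 1) (α - β - 1) j := by
  have hβpos : 0 < β := by linarith
  have hab : 0 < α - β := by linarith
  have hab1 : α - β ≤ 1 := by linarith
  have hK : Real.sin (π * α) / (Real.sin (π * (α - β)) + Real.sin (π * β)) < 0 :=
    K_neg hα1 hα2 hβ1 hβ2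
  set K := Real.sin (π * α) / (Real.sin (π * (α - β)) + Real.sin (π * β)) with hKdef
  have hK2 : 0 < K ^ 2 := pow_two_pos_of_ne_zero hK.ne
  have hΓα : 0 < Gamma α := Real.Gamma_pos_of_pos (by linarith)
  have hΓα1 : 0 < Gamma (α + 1) := Real.Gamma_pos_of_pos (by linarith)
  refine ⟨2 / (K ^ 2 * Gamma α * Gamma (α + 1)),
    div_pos (by norm_num) (mul_pos (mul_pos hK2 hΓα) hΓα1), ?_⟩
  intro f _ fc hfc c hc M N hNM
  -- positivity of Gnorm2 and nonvanishing of lamda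
  have hDpos : ∀ j : ℕ, 0 < Gnorm2 (β - 1) (α - β - 1) (j + 1) := by
    intro j
    rw [Gnorm2_val hα1 hβ2 j]
    have h1 : 0 < Gamma ((j:ℝ) + β + 1) :=
      Real.Gamma_pos_of_pos (by positivity)
    have h2 : 0 < Gamma ((j:ℝ) + (α - β) + 1) :=
      Real.Gamma_pos_of_pos (by positivity)
    have h3 : 0 < Gamma ((j:ℝ) + α) :=
      Real.Gamma_pos_of_pos (by positivity)
    have h4 : (0:ℝ) < 2 * (j:ℝ) + α + 1 := by positivity
    have h5 : (0:ℝ) < ((j+1).factorial : ℝ) := by positivity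
    positivity
  have hlam : ∀ j : ℕ, lamda α β j ≠ 0 := by
    intro j
    unfold lamda
    rw [← hKdef]
    have h3 : 0 < Gamma ((j:ℝ) + α) := Real.Gamma_pos_of_pos (by positivity)
    have h5 : (0:ℝ) < (j.factorial : ℝ) := by positivity
    exact mul_ne_zero hK.ne (by positivity)
  -- transform LHS
  have hW : Set.EqOn
      (fun x => rho (-(α - β)) (-β) x *
        (rho (α - β) β x * ∑ j ∈ Finset.Ico N M, c j * jacobiG (α - β) β j x) ^ 2)
      (fun x => (1 - x) ^ (α - β) * x ^ β *
        (∑ j ∈ Finset.Ico N M, c j * jacobiG (α - β) β j x) ^ 2)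
      (Set.uIcc (0:ℝ) 1) := by
    intro x hx
    rw [Set.uIcc_of_le (by norm_num : (0:ℝ) ≤ 1)] at hx
    have k1 := rpow_neg_sq (show (0:ℝ) ≤ 1 - x by linarith [hx.2]) hab
    have k2 := rpow_neg_sq hx.1 hβpos
    simp only [rho]
    calc (1 - x) ^ (-(α - β)) * x ^ (-β) *
          ((1 - x) ^ (α - β) * x ^ β * ∑ j ∈ Finset.Ico N M, c j * jacobiG (α - β) β j x) ^ 2
        = ((1 - x) ^ (-(α - β)) * ((1 - x) ^ (α - β)) ^ 2) * (x ^ (-β) * (x ^ β) ^ 2) *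
          (∑ j ∈ Finset.Ico N M, c j * jacobiG (α - β) β j x) ^ 2 := by ring
      _ = (1 - x) ^ (α - β) * x ^ β *
          (∑ j ∈ Finset.Ico N M, c j * jacobiG (α - β) β j x) ^ 2 := by rw [k1, k2]
  rw [intervalIntegral.integral_congr hW, sum_expansion hab hβpos c N M]
  -- transform RHS
  have hre : ∑ j ∈ Finset.Icc (N + 1) M, fc j ^ 2 / Gnorm2 (β - 1) (α - β - 1) j
      = ∑ j ∈ Finset.Ico N M, fc (j + 1) ^ 2 / Gnorm2 (β - 1) (α - β - 1) (j + 1) := by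
    rw [← Finset.Ico_add_one_right_eq_Icc, Finset.sum_Ico_eq_sum_range, Finset.sum_Ico_eq_sum_range,
      show M + 1 - (N + 1) = M - N by omega]
    apply Finset.sum_congr rfl
    intro i _
    have hi : N + 1 + i = N + i + 1 := by omega
    rw [hi]
  have hterm : ∀ j ∈ Finset.Ico N M,
      fc (j + 1) ^ 2 / Gnorm2 (β - 1) (α - β - 1) (j + 1)
        = c j ^ 2 * ((lamda α β j) ^ 2 * Gnorm2 (β - 1) (α - β - 1) (j + 1)) := by
    intro j _
    have hfcj : fc (j + 1) = c j * (lamda α β j * Gnorm2 (β - 1) (α - β - 1) (j + 1)) := by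
      rw [hc j, div_mul_cancel₀ _ (mul_ne_zero (hlam j) (hDpos j).ne')]
    rw [hfcj]
    have hD := (hDpos j).ne'
    field_simp
  rw [hre, Finset.sum_congr rfl hterm, Finset.mul_sum]
  apply Finset.sum_le_sum
  intro j _
  calc c j ^ 2 * ((∑ m ∈ Finset.range (j + 1), gcoef (α - β) β j m) *
        (Gamma ((j:ℝ) + (α - β) + 1) * Gamma ((j:ℝ) + β + 1) /
          Gamma ((α - β) + β + 2 * (j:ℝ) + 2)))
      ≤ c j ^ 2 * ((2 / (K ^ 2 * Gamma α * Gamma (α + 1))) *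
        ((lamda α β j) ^ 2 * Gnorm2 (β - 1) (α - β - 1) (j + 1))) :=
        mul_le_mul_of_nonneg_left (key_bound hα1 hα2 hβ1 hβ2 j) (sq_nonneg _)
    _ = 2 / (K ^ 2 * Gamma α * Gamma (α + 1)) *
        (c j ^ 2 * ((lamda α β j) ^ 2 * Gnorm2 (β - 1) (α - β - 1) (j + 1))) := by ring
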